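/- arXiv:2512.16565 — 5 statements merged into one kernel-verified Lean document; each statement's English description precedes it below -/
import Mathlib

section
/- For all θ, θ' ∈ ℝ^A and every a ∈ A, the gradients of the softmax probabilities satisfy ‖∇_θ π_θ(a) − ∇_{θ'} π_{θ'}(a)‖₂ ≤ 3 ‖θ − θ'‖₂; that is, the map θ ↦ ∇_θ π_θ(a) = π_θ(a)(e_a − π_θ) is 3-Lipschitz. -/
/-!
Writing `π = π_θ`, the gradient is `π(a) (e_a - π)`, so the difference of two gradients splits as
`(π(a) - π'(a)) (e_a - π) + π'(a) (π' - π)`. Since `‖e_a - π‖ ≤ 2` and `π'(a) ≤ 1`, its norm is at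
most `3 ‖π - π'‖`, and it remains that softmax is 1-Lipschitz. By the mean value inequality this
follows from the Jacobian `v ↦ π ⊙ (v - ⟪π, v⟫)` having norm at most one: with `m = ⟪π, v⟫`,
`∑ πᵢ² (vᵢ - m)² ≤ ∑ πᵢ (vᵢ - m)² = ∑ πᵢ vᵢ² - m² ≤ ‖v‖²`.
-/

/-- The softmax distribution on a finite set `A`, viewed as a vector in `ℝ^A`. -/
noncomputable def softmax {A : Type*} [Fintype A] (θ : A → ℝ) (a : A) : ℝ :=
  Real.exp (θ a) / ∑ a' : A, Real.exp (θ a')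

open scoped RealInnerProductSpace

lemma sum_sq_mul_sub_weighted_mean_le {ι : Type*} [Fintype ι] (p v : ι → ℝ)
    (hp₀ : ∀ i, 0 ≤ p i) (hp₁ : ∑ i, p i = 1) :
    ∑ i, (p i * (v i - ∑ j, p j * v j)) ^ 2 ≤ ∑ i, v i ^ 2 := by
  set m := ∑ j, p j * v j
  have hp_le_one (i : ι) : p i ≤ 1 :=
    hp₁ ▸ Finset.single_le_sum (fun j _ => hp₀ j) (Finset.mem_univ i)
  have variance : ∑ i, p i * (v i - m) ^ 2 = ∑ i, p i * v i ^ 2 - m ^ 2 := by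
    have expand (i : ι) :
        p i * (v i - m) ^ 2 = p i * v i ^ 2 - 2 * m * (p i * v i) + m ^ 2 * p i := by ring
    simp only [expand, Finset.sum_add_distrib, Finset.sum_sub_distrib, ← Finset.mul_sum, hp₁]
    ring
  calc ∑ i, (p i * (v i - m)) ^ 2
      ≤ ∑ i, p i * (v i - m) ^ 2 := Finset.sum_le_sum fun i _ => by
        rw [mul_pow]
        exact mul_le_mul_of_nonneg_right
          (pow_le_of_le_one (hp₀ i) (hp_le_one i) two_ne_zero) (sq_nonneg _)
    _ ≤ ∑ i, p i * v i ^ 2 := by rw [variance]; linarith [sq_nonneg m]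
    _ ≤ ∑ i, v i ^ 2 := Finset.sum_le_sum fun i _ =>
        mul_le_of_le_one_left (sq_nonneg _) (hp_le_one i)

section

variable {A : Type*} [Fintype A]

lemma sum_exp_pos [Nonempty A] (θ : A → ℝ) : 0 < ∑ a, Real.exp (θ a) :=
  Finset.sum_pos (fun _ _ => Real.exp_pos _) Finset.univ_nonempty

lemma softmax_pos (θ : A → ℝ) (a : A) : 0 < softmax θ a :=
  have : Nonempty A := ⟨a⟩
  div_pos (Real.exp_pos _) (sum_exp_pos θ)

lemma sum_softmax [Nonempty A] (θ : A → ℝ) : ∑ a, softmax θ a = 1 := by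
  simp only [softmax, ← Finset.sum_div, div_self (sum_exp_pos θ).ne']

lemma softmax_le_one (θ : A → ℝ) (a : A) : softmax θ a ≤ 1 :=
  have : Nonempty A := ⟨a⟩
  sum_softmax θ ▸ Finset.single_le_sum (fun b _ => (softmax_pos θ b).le) (Finset.mem_univ a)

noncomputable def softmaxVec (θ : EuclideanSpace ℝ A) : EuclideanSpace ℝ A :=
  WithLp.toLp 2 (softmax θ)

@[simp]
lemma softmaxVec_apply (θ : EuclideanSpace ℝ A) (a : A) : softmaxVec θ a = softmax θ a := rfl

lemma norm_softmaxVec_le_one [Nonempty A] (θ : EuclideanSpace ℝ A) : ‖softmaxVec θ‖ ≤ 1 := by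
  refine (sq_le_one_iff₀ (norm_nonneg _)).1 ?_
  calc ‖softmaxVec θ‖ ^ 2 = ∑ a, softmax θ a ^ 2 := EuclideanSpace.real_norm_sq_eq _
    _ ≤ (∑ a, softmax θ a) ^ 2 := Finset.sum_sq_le_sq_sum_of_nonneg fun a _ => (softmax_pos θ a).le
    _ = 1 := by rw [sum_softmax, one_pow]

section

variable [DecidableEq A]

noncomputable def softmaxGrad (θ : EuclideanSpace ℝ A) (a : A) : EuclideanSpace ℝ A :=
  softmax θ a • (EuclideanSpace.single a 1 - softmaxVec θ)

lemma inner_softmaxGrad (θ v : EuclideanSpace ℝ A) (a : A) :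
    ⟪softmaxGrad θ a, v⟫ = softmax θ a * (v a - ∑ b, softmax θ b * v b) := by
  simp [softmaxGrad, inner_smul_left, inner_sub_left, PiLp.inner_apply, mul_comm]

lemma hasGradientAt_softmax (θ : EuclideanSpace ℝ A) (a : A) :
    HasGradientAt (fun η : EuclideanSpace ℝ A => softmax η a) (softmaxGrad θ a) θ := by
  have : Nonempty A := ⟨a⟩
  have hexp (b : A) : HasFDerivAt (fun η : EuclideanSpace ℝ A => Real.exp (η b))
      (Real.exp (θ b) • EuclideanSpace.proj b) θ :=
    (EuclideanSpace.proj b).hasFDerivAt.exp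
  have hsum := HasFDerivAt.fun_sum (u := Finset.univ) fun b _ => hexp b
  have hquot := (hexp a).mul ((hasDerivAt_inv (sum_exp_pos θ).ne').comp_hasFDerivAt θ hsum)
  refine hquot.congr_fderiv (ContinuousLinearMap.ext fun v => ?_)
  simp only [neg_smul, smul_neg, Function.comp_apply, add_apply, neg_apply, smul_apply, sum_apply,
    PiLp.proj_apply, smul_eq_mul, InnerProductSpace.toDual_apply_apply, inner_softmaxGrad, softmax,
    div_mul_eq_mul_div, ← Finset.sum_div]
  field_simp
  ring

noncomputable def softmaxJacobian (θ : EuclideanSpace ℝ A) :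
    EuclideanSpace ℝ A →L[ℝ] EuclideanSpace ℝ A :=
  (EuclideanSpace.equiv A ℝ).symm.toContinuousLinearMap ∘L
    ContinuousLinearMap.pi fun a => InnerProductSpace.toDual ℝ _ (softmaxGrad θ a)

lemma softmaxJacobian_apply (θ v : EuclideanSpace ℝ A) (a : A) :
    softmaxJacobian θ v a = ⟪softmaxGrad θ a, v⟫ := rfl

lemma hasFDerivAt_softmaxVec (θ : EuclideanSpace ℝ A) :
    HasFDerivAt softmaxVec (softmaxJacobian θ) θ :=
  (EuclideanSpace.equiv A ℝ).symm.comp_hasFDerivAt_iff.2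
    (hasFDerivAt_pi.2 fun a => hasGradientAt_softmax θ a)

lemma norm_softmaxJacobian_le_one [Nonempty A] (θ : EuclideanSpace ℝ A) :
    ‖softmaxJacobian θ‖ ≤ 1 :=
  ContinuousLinearMap.opNorm_le_bound _ zero_le_one fun v => by
    rw [one_mul, ← sq_le_sq₀ (norm_nonneg _) (norm_nonneg _), EuclideanSpace.real_norm_sq_eq,
      EuclideanSpace.real_norm_sq_eq]
    simp only [softmaxJacobian_apply, inner_softmaxGrad]
    exact sum_sq_mul_sub_weighted_mean_le _ _ (fun a => (softmax_pos θ a).le) (sum_softmax θ)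

end

lemma norm_softmaxVec_sub_le [Nonempty A] (θ θ' : EuclideanSpace ℝ A) :
    ‖softmaxVec θ - softmaxVec θ'‖ ≤ ‖θ - θ'‖ := by
  classical
  simpa using convex_univ.norm_image_sub_le_of_norm_hasFDerivWithin_le
    (fun (η : EuclideanSpace ℝ A) _ => (hasFDerivAt_softmaxVec η).hasFDerivWithinAt)
    (fun η _ => norm_softmaxJacobian_le_one η) (Set.mem_univ θ') (Set.mem_univ θ)

variable [DecidableEq A]

lemma norm_softmaxGrad_sub_le [Nonempty A] (θ θ' : EuclideanSpace ℝ A) (a : A) :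
    ‖softmaxGrad θ a - softmaxGrad θ' a‖ ≤ 3 * ‖θ - θ'‖ := by
  set π := softmaxVec θ
  set π' := softmaxVec θ'
  set e : EuclideanSpace ℝ A := EuclideanSpace.single a 1
  have decomposition : softmaxGrad θ a - softmaxGrad θ' a =
      (π a - π' a) • (e - π) + π' a • (π' - π) := by
    simp only [softmaxGrad, softmaxVec_apply, π, π']
    module
  have hπ : ‖π - π'‖ ≤ ‖θ - θ'‖ := norm_softmaxVec_sub_le θ θ'
  have hcoord : |π a - π' a| ≤ ‖θ - θ'‖ :=
    (PiLp.norm_apply_le (π - π') a).trans hπ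
  have he : ‖e - π‖ ≤ 2 :=
    calc ‖e - π‖ ≤ ‖e‖ + ‖π‖ := norm_sub_le _ _
      _ ≤ 1 + 1 := by
        rw [PiLp.norm_single, norm_one]
        exact add_le_add_right (norm_softmaxVec_le_one θ) 1
      _ = 2 := one_add_one_eq_two
  have hπ'a : |π' a| ≤ 1 := by
    rw [softmaxVec_apply, abs_of_pos (softmax_pos θ' a)]
    exact softmax_le_one θ' a
  calc ‖softmaxGrad θ a - softmaxGrad θ' a‖
      ≤ |π a - π' a| * ‖e - π‖ + |π' a| * ‖π' - π‖ := by
        rw [decomposition, ← Real.norm_eq_abs, ← Real.norm_eq_abs, ← norm_smul, ← norm_smul]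
        exact norm_add_le _ _
    _ ≤ ‖θ - θ'‖ * 2 + 1 * ‖θ - θ'‖ := by
        gcongr
        rwa [norm_sub_rev]
    _ = 3 * ‖θ - θ'‖ := by ring

end

/-- For all `θ, θ' ∈ ℝ^A` and every `a ∈ A`, the gradients of the
softmax probabilities satisfy `‖∇_θ π_θ(a) − ∇_{θ'} π_{θ'}(a)‖₂ ≤ 3 ‖θ − θ'‖₂`;
the gradient is `∇_θ π_θ(a) = π_θ(a)(e_a − π_θ)`, so this map is 3-Lipschitz. -/
theorem softmax_gradient_lipschitz
    {A : Type*} [Fintype A] [Nonempty A] [DecidableEq A]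
    (θ θ' : EuclideanSpace ℝ A) (a : A) :
    gradient (fun η : EuclideanSpace ℝ A => softmax η a) θ =
      (EuclideanSpace.equiv A ℝ).symm
        (fun a' => softmax θ a * ((if a' = a then (1 : ℝ) else 0) - softmax θ a')) ∧
    ‖gradient (fun η : EuclideanSpace ℝ A => softmax η a) θ -
        gradient (fun η : EuclideanSpace ℝ A => softmax η a) θ'‖ ≤ 3 * ‖θ - θ'‖ := by
  rw [(hasGradientAt_softmax θ a).gradient, (hasGradientAt_softmax θ' a).gradient]
  refine ⟨?_, norm_softmaxGrad_sub_le θ θ' a⟩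
  ext a'
  simp [softmaxGrad]
end

section
/- For all θ, θ' ∈ ℝ^A and every a ∈ A, the log-probabilities of the softmax distribution satisfy |log π_θ(a) − log π_{θ'}(a)| ≤ √2 ‖θ − θ'‖₂. -/
/-- For all `θ, θ' ∈ ℝ^A` and every `a ∈ A`, the log-probabilities of
the softmax distribution satisfy `|log π_θ(a) − log π_{θ'}(a)| ≤ √2 ‖θ − θ'‖₂`. -/
theorem softmax_log_prob_lipschitz
    {A : Type*} [Fintype A] [Nonempty A]
    (θ θ' : EuclideanSpace ℝ A) (a : A) :
    |Real.log (softmax θ a) - Real.log (softmax θ' a)| ≤ Real.sqrt 2 * ‖θ - θ'‖ := by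
  set d : A → ℝ := fun x => θ x - θ' x with hd
  have hS : ∀ t : A → ℝ, 0 < ∑ x : A, Real.exp (t x) := fun t =>
    Finset.sum_pos (fun x _ => Real.exp_pos _) Finset.univ_nonempty
  have hlog : ∀ (t : A → ℝ), Real.log (softmax t a)
      = t a - Real.log (∑ x : A, Real.exp (t x)) := by
    intro t
    rw [softmax, Real.log_div (Real.exp_ne_zero _) (ne_of_gt (hS t)), Real.log_exp]
  -- norm identity
  have hnorm : Real.sqrt 2 * ‖θ - θ'‖ = Real.sqrt (2 * ∑ x : A, d x ^ 2) := by
    rw [EuclideanSpace.norm_eq, Real.sqrt_mul (by norm_num : (0:ℝ) ≤ 2)]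
    congr 2
    refine Finset.sum_congr rfl fun x _ => ?_
    simp [hd, Real.norm_eq_abs, sq_abs]
  -- key pointwise bound
  have hkey : ∀ c : A, |d a - d c| ≤ Real.sqrt 2 * ‖θ - θ'‖ := by
    classical
    intro c
    rcases eq_or_ne a c with rfl | hne
    · simp only [sub_self, abs_zero]
      positivity
    · rw [hnorm, ← Real.sqrt_sq_eq_abs]
      apply Real.sqrt_le_sqrt
      have h1 : d a ^ 2 + d c ^ 2 ≤ ∑ x : A, d x ^ 2 := by
        have := Finset.sum_le_sum_of_subset_of_nonneg
          (Finset.subset_univ ({a, c} : Finset A))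
          (fun x _ _ => sq_nonneg (d x))
        rwa [Finset.sum_pair hne] at this
      nlinarith [sq_nonneg (d a + d c), sq_nonneg (d a - d c)]
  -- bounds on the difference of log-sums
  obtain ⟨b, -, hb⟩ := Finset.exists_min_image Finset.univ d Finset.univ_nonempty
  obtain ⟨b', -, hb'⟩ := Finset.exists_max_image Finset.univ d Finset.univ_nonempty
  have hθ : ∀ x : A, θ x = d x + θ' x := fun x => by simp [hd]
  have hupper : ∑ x : A, Real.exp (θ x) ≤ Real.exp (d b') * ∑ x : A, Real.exp (θ' x) := by
    rw [Finset.mul_sum]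
    refine Finset.sum_le_sum fun x _ => ?_
    rw [hθ x, Real.exp_add]
    exact mul_le_mul_of_nonneg_right (Real.exp_le_exp.2 (hb' x (Finset.mem_univ x)))
      (Real.exp_pos _).le
  have hlower : Real.exp (d b) * ∑ x : A, Real.exp (θ' x) ≤ ∑ x : A, Real.exp (θ x) := by
    rw [Finset.mul_sum]
    refine Finset.sum_le_sum fun x _ => ?_
    rw [hθ x, Real.exp_add]
    exact mul_le_mul_of_nonneg_right (Real.exp_le_exp.2 (hb x (Finset.mem_univ x)))
      (Real.exp_pos _).le
  have hlogU : Real.log (∑ x : A, Real.exp (θ x)) - Real.log (∑ x : A, Real.exp (θ' x))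
      ≤ d b' := by
    have := Real.log_le_log (hS θ) hupper
    rwa [Real.log_mul (Real.exp_ne_zero _) (ne_of_gt (hS θ')), Real.log_exp,
      ← sub_le_iff_le_add] at this
  have hlogL : d b ≤ Real.log (∑ x : A, Real.exp (θ x))
      - Real.log (∑ x : A, Real.exp (θ' x)) := by
    have := Real.log_le_log (mul_pos (Real.exp_pos _) (hS θ')) hlower
    rw [Real.log_mul (Real.exp_ne_zero _) (ne_of_gt (hS θ')), Real.log_exp] at this
    linarith
  rw [hlog θ, hlog θ']
  have heq : (θ a - Real.log (∑ x : A, Real.exp (θ x)))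
      - (θ' a - Real.log (∑ x : A, Real.exp (θ' x)))
      = d a - (Real.log (∑ x : A, Real.exp (θ x))
        - Real.log (∑ x : A, Real.exp (θ' x))) := by
    simp [hd]; ring
  rw [heq]
  rw [abs_le]
  constructor
  · have h1 := hkey b'
    rw [abs_le] at h1
    linarith [h1.1]
  · have h1 := hkey b
    rw [abs_le] at h1
    linarith [h1.2]
end

section
/- (Performance difference lemma) For any two policies π₁ and π₂ and any probability distribution ρ on S, Ṽ_λ^{π₁}(ρ) − Ṽ_λ^{π₂}(ρ) = (1/(1−γ)) ∑_s d_ρ^{π₁}(s) [ ∑_a (π₁(a|s) − π₂(a|s)) Q̃_λ^{π₂}(s,a) − λ ( D_f(π₁(·|s), π_ref(·|s)) − D_f(π₂(·|s), π_ref(·|s)) ) ]. -/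
open Finset

/-- The `f`-divergence `D_f(p,q) := ∑_a q(a) f(p(a)/q(a))` of two probability vectors. -/
noncomputable def fDiv {A : Type*} [Fintype A] (f : ℝ → ℝ) (p q : A → ℝ) : ℝ :=
  ∑ a : A, q a * f (p a / q a)

/-- `π` is a policy: each `π(·|s)` is a strictly positive probability distribution on `A`. -/
def IsPolicy {S A : Type*} [Fintype A] (π : S → A → ℝ) : Prop :=
  (∀ s a, 0 < π s a) ∧ ∀ s, ∑ a : A, π s a = 1

/-- `V` satisfies the Bellman equation of the `f`-divergence regularized value function
`Ṽ_λ^π`. -/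
def IsRegValue {S A : Type*} [Fintype S] [Fintype A]
    (P : S → A → S → ℝ) (r : S → A → ℝ) (γ lam : ℝ) (f : ℝ → ℝ)
    (πref π : S → A → ℝ) (V : S → ℝ) : Prop :=
  ∀ s, V s = (∑ a : A, π s a * (r s a + γ * ∑ s' : S, P s a s' * V s')) -
      lam * fDiv f (π s) (πref s)

/-- The regularized Q-function `Q̃_λ^π`. -/
noncomputable def Qreg {S A : Type*} [Fintype S] [Fintype A]
    (P : S → A → S → ℝ) (r : S → A → ℝ) (γ lam : ℝ) (f : ℝ → ℝ)
    (πref π : S → A → ℝ) (V : S → ℝ) (s : S) (a : A) : ℝ :=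
  r s a - lam * fDiv f (π s) (πref s) + γ * ∑ s' : S, P s a s' * V s'

/-- `d` is the discounted state-visitation distribution `d_μ^π`. -/
def IsVisitation {S A : Type*} [Fintype S] [Fintype A]
    (P : S → A → S → ℝ) (γ : ℝ) (π : S → A → ℝ) (μ d : S → ℝ) : Prop :=
  ∀ s, d s = (1 - γ) * μ s + γ * ∑ s' : S, d s' * ∑ a : A, π s' a * P s' a s

/-- (Performance difference lemma) For any two policies `π₁`, `π₂` and
any probability distribution `ρ` on `S`,
`Ṽ_λ^{π₁}(ρ) − Ṽ_λ^{π₂}(ρ) = (1/(1−γ)) ∑_s d_ρ^{π₁}(s) [ ∑_a (π₁(a|s) − π₂(a|s)) Q̃_λ^{π₂}(s,a)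
  − λ ( D_f(π₁(·|s), π_ref(·|s)) − D_f(π₂(·|s), π_ref(·|s)) ) ]`. -/
theorem performance_difference
    {S A : Type*} [Fintype S] [Fintype A] [Nonempty S] [Nonempty A]
    (P : S → A → S → ℝ) (hP : ∀ s a, (∀ s', 0 ≤ P s a s') ∧ ∑ s' : S, P s a s' = 1)
    (r : S → A → ℝ) (rmax : ℝ) (hr : ∀ s a, 0 ≤ r s a ∧ r s a ≤ rmax)
    (γ : ℝ) (hγ0 : 0 ≤ γ) (hγ1 : γ < 1)
    (πref : S → A → ℝ) (hπref : IsPolicy πref)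
    (f : ℝ → ℝ) (hfconv : ConvexOn ℝ (Set.Ioi 0) f) (hf1 : f 1 = 0)
    (lam : ℝ) (hlam : 0 < lam)
    (π₁ π₂ : S → A → ℝ) (hπ₁ : IsPolicy π₁) (hπ₂ : IsPolicy π₂)
    (V₁ V₂ : S → ℝ)
    (hV₁ : IsRegValue P r γ lam f πref π₁ V₁)
    (hV₂ : IsRegValue P r γ lam f πref π₂ V₂)
    (ρ : S → ℝ) (hρ : (∀ s, 0 ≤ ρ s) ∧ ∑ s : S, ρ s = 1)
    (d₁ : S → ℝ) (hd₁ : IsVisitation P γ π₁ ρ d₁) :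
    (∑ s : S, ρ s * V₁ s) - (∑ s : S, ρ s * V₂ s) =
      (1 / (1 - γ)) * ∑ s : S, d₁ s *
        ((∑ a : A, (π₁ s a - π₂ s a) * Qreg P r γ lam f πref π₂ V₂ s a) -
          lam * (fDiv f (π₁ s) (πref s) - fDiv f (π₂ s) (πref s))) := by
  have hγne : (1 : ℝ) - γ ≠ 0 := by linarith
  -- Step A : pointwise identity
  have stepA : ∀ s,
      ((∑ a : A, (π₁ s a - π₂ s a) * Qreg P r γ lam f πref π₂ V₂ s a) -
        lam * (fDiv f (π₁ s) (πref s) - fDiv f (π₂ s) (πref s)))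
      = (V₁ s - V₂ s) -
        γ * ∑ s' : S, (∑ a : A, π₁ s a * P s a s') * (V₁ s' - V₂ s') := by
    intro s
    have h1 := hV₁ s
    have h2 := hV₂ s
    have hs1 := hπ₁.2 s
    have hs2 := hπ₂.2 s
    -- rewrite the double sum
    have e1 : ∑ s' : S, (∑ a : A, π₁ s a * P s a s') * (V₁ s' - V₂ s')
        = ∑ a : A, π₁ s a *
            ((∑ s' : S, P s a s' * V₁ s') - (∑ s' : S, P s a s' * V₂ s')) := by
      simp_rw [Finset.sum_mul]
      rw [Finset.sum_comm]
      apply Finset.sum_congr rfl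
      intro a _
      rw [← Finset.sum_sub_distrib, Finset.mul_sum]
      apply Finset.sum_congr rfl
      intro s' _
      ring
    have hzero : ∑ a : A, (π₁ s a - π₂ s a) * (lam * fDiv f (π₂ s) (πref s)) = 0 := by
      rw [← Finset.sum_mul, Finset.sum_sub_distrib, hs1, hs2]
      ring
    have eQ : ∑ a : A, (π₁ s a - π₂ s a) * Qreg P r γ lam f πref π₂ V₂ s a
        = (∑ a : A, (π₁ s a - π₂ s a) *
            (r s a + γ * ∑ s' : S, P s a s' * V₂ s'))
          - ∑ a : A, (π₁ s a - π₂ s a) * (lam * fDiv f (π₂ s) (πref s)) := by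
      rw [← Finset.sum_sub_distrib]
      apply Finset.sum_congr rfl
      intro a _
      simp only [Qreg]
      ring
    have esplit : ∑ a : A, (π₁ s a - π₂ s a) *
          (r s a + γ * ∑ s' : S, P s a s' * V₂ s')
        = (∑ a : A, π₁ s a * (r s a + γ * ∑ s' : S, P s a s' * V₂ s'))
          - ∑ a : A, π₂ s a * (r s a + γ * ∑ s' : S, P s a s' * V₂ s') := by
      rw [← Finset.sum_sub_distrib]
      apply Finset.sum_congr rfl
      intro a _
      ring
    have epull : (∑ a : A, π₁ s a * (r s a + γ * ∑ s' : S, P s a s' * V₁ s'))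
        - γ * ∑ a : A, π₁ s a *
            ((∑ s' : S, P s a s' * V₁ s') - (∑ s' : S, P s a s' * V₂ s'))
        = ∑ a : A, π₁ s a * (r s a + γ * ∑ s' : S, P s a s' * V₂ s') := by
      rw [Finset.mul_sum, ← Finset.sum_sub_distrib]
      apply Finset.sum_congr rfl
      intro a _
      ring
    rw [eQ, esplit, hzero, e1]
    linarith [h1, h2, epull]
  -- Step B : summed identity against the visitation distribution
  have stepB : ∑ s : S, d₁ s *
        ((∑ a : A, (π₁ s a - π₂ s a) * Qreg P r γ lam f πref π₂ V₂ s a) -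
          lam * (fDiv f (π₁ s) (πref s) - fDiv f (π₂ s) (πref s)))
      = (1 - γ) * ∑ s : S, ρ s * (V₁ s - V₂ s) := by
    have e2 : ∀ s', γ * ∑ s : S, d₁ s * ∑ a : A, π₁ s a * P s a s'
        = d₁ s' - (1 - γ) * ρ s' := by
      intro s'
      have := hd₁ s'
      linarith
    have e3 : ∀ s', ∑ s : S, d₁ s * γ *
          ((∑ a : A, π₁ s a * P s a s') * (V₁ s' - V₂ s'))
        = (d₁ s' - (1 - γ) * ρ s') * (V₁ s' - V₂ s') := by
      intro s'
      have estep : ∑ s : S, d₁ s * γ *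
            ((∑ a : A, π₁ s a * P s a s') * (V₁ s' - V₂ s'))
          = (∑ s : S, d₁ s * ∑ a : A, π₁ s a * P s a s') * (γ * (V₁ s' - V₂ s')) := by
        rw [Finset.sum_mul]
        apply Finset.sum_congr rfl
        intro s _
        ring
      rw [estep]
      linear_combination (V₁ s' - V₂ s') * e2 s'
    calc ∑ s : S, d₁ s *
          ((∑ a : A, (π₁ s a - π₂ s a) * Qreg P r γ lam f πref π₂ V₂ s a) -
            lam * (fDiv f (π₁ s) (πref s) - fDiv f (π₂ s) (πref s)))
        = ∑ s : S, (d₁ s * (V₁ s - V₂ s) -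
            ∑ s' : S, d₁ s * γ *
              ((∑ a : A, π₁ s a * P s a s') * (V₁ s' - V₂ s'))) := by
          apply Finset.sum_congr rfl
          intro s _
          rw [stepA s, ← Finset.mul_sum]
          ring
      _ = (∑ s : S, d₁ s * (V₁ s - V₂ s)) -
            ∑ s : S, ∑ s' : S, d₁ s * γ *
              ((∑ a : A, π₁ s a * P s a s') * (V₁ s' - V₂ s')) := by
          rw [Finset.sum_sub_distrib]
      _ = (∑ s : S, d₁ s * (V₁ s - V₂ s)) -
            ∑ s' : S, (d₁ s' - (1 - γ) * ρ s') * (V₁ s' - V₂ s') := by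
          rw [Finset.sum_comm]
          congr 1
          exact Finset.sum_congr rfl fun s' _ => e3 s'
      _ = (1 - γ) * ∑ s : S, ρ s * (V₁ s - V₂ s) := by
          rw [Finset.mul_sum, ← Finset.sum_sub_distrib]
          apply Finset.sum_congr rfl
          intro s _
          ring
  have hfin : ∑ s : S, ρ s * (V₁ s - V₂ s)
      = (∑ s : S, ρ s * V₁ s) - ∑ s : S, ρ s * V₂ s := by
    rw [← Finset.sum_sub_distrib]
    apply Finset.sum_congr rfl
    intro s _
    ring
  rw [stepB, ← hfin]
  field_simp
end

section
/- (Policy gradient formula) Suppose f is differentiable on (0,∞). Then the map θ ↦ Ṽ_λ^{π_θ}(u) from ℝ^{S×A} to ℝ is differentiable, and for every s ∈ S and a ∈ A its partial derivative is ∂Ṽ_λ^{π_θ}(u)/∂θ_{sa} = (d_u^{π_θ}(s)/(1−γ)) · π_θ(a|s) · [ Ã_λ^{π_θ}(s,a) − λ ( f'(w_{sa}) − ∑_{a'} π_θ(a'|s) f'(w_{sa'}) ) ], where w_{sa} := π_θ(a|s)/π_ref(a|s). -/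
open Finset

/-- The softmax policy `π_θ(a|s) = exp(θ_{sa})/∑_{a'} exp(θ_{sa'})`. -/
noncomputable def softmaxPolicy {S A : Type*} [Fintype A]
    (θ : S × A → ℝ) (s : S) (a : A) : ℝ :=
  Real.exp (θ (s, a)) / ∑ a' : A, Real.exp (θ (s, a'))

/-! The value `Ṽ^{π_θ}` solves the linear system `(1 - γ P_π) V = R_π`, whose matrix is
strictly diagonally dominant, so by Cramer's rule it depends differentiably on `θ`.
Differentiating the Bellman equation along a line `θ + t v` gives `V' = K + γ P_π V'`, where
`K(s)` is the derivative of the policy paired with the soft `Q`-values minus `λ f'(w)`; pairing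
with the visitation distribution turns this into `(1 - γ) u ⬝ V' = d ⬝ K`. For softmax, `K(s)` is
a covariance under `π_θ(·|s)`, which the Bellman equation rewrites in terms of the advantage. -/

section

variable {S A : Type*} [Fintype A]

section Softmax

variable [Nonempty A]

lemma softmaxPolicy_pos (θ : S × A → ℝ) (s : S) (a : A) : 0 < softmaxPolicy θ s a :=
  div_pos (Real.exp_pos _) (sum_pos (fun _ _ => Real.exp_pos _) univ_nonempty)

lemma sum_softmaxPolicy (θ : S × A → ℝ) (s : S) : ∑ a, softmaxPolicy θ s a = 1 := by
  simp only [softmaxPolicy]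
  rw [← sum_div, div_self (sum_pos (fun _ _ => Real.exp_pos _) univ_nonempty).ne']

lemma isPolicy_softmaxPolicy (θ : S × A → ℝ) : IsPolicy (softmaxPolicy θ) :=
  ⟨softmaxPolicy_pos θ, sum_softmaxPolicy θ⟩

lemma differentiable_softmaxPolicy [Fintype S] (s : S) (a : A) :
    Differentiable ℝ (fun θ : EuclideanSpace ℝ (S × A) => softmaxPolicy θ s a) := by
  have hexp (b : A) : Differentiable ℝ (fun θ : EuclideanSpace ℝ (S × A) => Real.exp (θ (s, b))) :=
    Real.differentiable_exp.comp (EuclideanSpace.proj (𝕜 := ℝ) ((s, b) : S × A)).differentiable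
  simp only [softmaxPolicy, div_eq_mul_inv]
  exact (hexp a).mul ((Differentiable.fun_sum fun b _ => hexp b).inv
    fun θ => (sum_pos (fun _ _ => Real.exp_pos _) univ_nonempty).ne')

lemma hasDerivAt_softmaxPolicy_line (θ v : S × A → ℝ) (s : S) (b : A) :
    HasDerivAt (fun t : ℝ => softmaxPolicy (θ + t • v) s b)
      (softmaxPolicy θ s b * (v (s, b) - ∑ c, softmaxPolicy θ s c * v (s, c))) 0 := by
  have hexp (c : A) : HasDerivAt (fun t : ℝ => Real.exp (θ (s, c) + t * v (s, c)))
      (Real.exp (θ (s, c)) * v (s, c)) 0 := by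
    simpa using (((hasDerivAt_id (0 : ℝ)).mul_const (v (s, c))).const_add (θ (s, c))).exp
  have hZ : 0 < ∑ c, Real.exp (θ (s, c)) := sum_pos (fun _ _ => Real.exp_pos _) univ_nonempty
  have hline : (fun t : ℝ => softmaxPolicy (θ + t • v) s b) = fun t =>
      Real.exp (θ (s, b) + t * v (s, b)) / ∑ c, Real.exp (θ (s, c) + t * v (s, c)) := by
    funext t
    simp [softmaxPolicy]
  rw [hline]
  refine ((hexp b).fun_div (HasDerivAt.fun_sum fun c _ => hexp c)
    (by simpa using hZ.ne')).congr_deriv ?_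
  simp only [zero_mul, add_zero, softmaxPolicy, div_mul_eq_mul_div, ← sum_div]
  field_simp

end Softmax

lemma sum_mul_sub_sum_mul (p v g : A → ℝ) :
    ∑ a, p a * (v a - ∑ c, p c * v c) * g a = ∑ a, v a * (p a * (g a - ∑ c, p c * g c)) := by
  set pv := ∑ c, p c * v c
  set pg := ∑ c, p c * g c
  have hl : ∑ a, p a * (v a - pv) * g a = ∑ a, p a * v a * g a - pv * pg := by
    rw [mul_sum, ← sum_sub_distrib]
    exact sum_congr rfl fun a _ => by ring
  have hr : ∑ a, v a * (p a * (g a - pg)) = ∑ a, p a * v a * g a - pg * pv := by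
    rw [mul_sum, ← sum_sub_distrib]
    exact sum_congr rfl fun a _ => by ring
  rw [hl, hr, mul_comm]

lemma hasDerivAt_fDiv {f : ℝ → ℝ} (hf : ∀ x ∈ Set.Ioi (0 : ℝ), DifferentiableAt ℝ f x)
    {p : ℝ → A → ℝ} {p' q : A → ℝ} {t : ℝ} (hp : ∀ b, HasDerivAt (p · b) (p' b) t)
    (hp_pos : ∀ b, 0 < p t b) (hq : ∀ b, 0 < q b) :
    HasDerivAt (fun t => fDiv f (p t) q) (∑ b, deriv f (p t b / q b) * p' b) t := by
  refine HasDerivAt.fun_sum fun b _ => ?_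
  have hfb := (hf _ (div_pos (hp_pos b) (hq b))).hasDerivAt.comp t ((hp b).div_const (q b))
  refine (hfb.const_mul (q b)).congr_deriv ?_
  field_simp [(hq b).ne']

lemma differentiable_fDiv {E : Type*} [NormedAddCommGroup E] [NormedSpace ℝ E] {f : ℝ → ℝ}
    (hf : ∀ x ∈ Set.Ioi (0 : ℝ), DifferentiableAt ℝ f x) {p : E → A → ℝ} {q : A → ℝ}
    (hp : ∀ b, Differentiable ℝ (p · b)) (hp_pos : ∀ x b, 0 < p x b) (hq : ∀ b, 0 < q b) :
    Differentiable ℝ (fun x => fDiv f (p x) q) := fun x =>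
  DifferentiableAt.fun_sum fun b _ => ((hf _ (div_pos (hp_pos x b) (hq b))).comp x
    (by simpa only [div_eq_mul_inv] using (hp b x).mul_const (q b)⁻¹)).const_mul (q b)

section LinearSystem

open Matrix

variable {E : Type*} [NormedAddCommGroup E] [NormedSpace ℝ E] {n : Type*} [Fintype n]
  [DecidableEq n]

lemma differentiable_det {M : E → Matrix n n ℝ} (hM : ∀ i j, Differentiable ℝ (M · i j)) :
    Differentiable ℝ (fun x => (M x).det) := by
  simp only [det_apply']
  fun_prop

lemma differentiable_of_mulVec_eq {M : E → Matrix n n ℝ} {b x : E → n → ℝ}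
    (hM : ∀ i j, Differentiable ℝ (M · i j)) (hb : ∀ i, Differentiable ℝ (b · i))
    (hdet : ∀ y, (M y).det ≠ 0) (hx : ∀ y, M y *ᵥ x y = b y) (i : n) :
    Differentiable ℝ (x · i) := by
  have hcramer (y : E) : x y i = ((M y).det)⁻¹ * ((M y).updateCol i (b y)).det := by
    rw [← cramer_apply, ← hx y, cramer_eq_adjugate_mulVec, mulVec_mulVec, adjugate_mul,
      smul_mulVec, one_mulVec, Pi.smul_apply, smul_eq_mul, inv_mul_cancel_left₀ (hdet y)]
  simp only [hcramer]
  refine ((differentiable_det hM).inv hdet).mul (differentiable_det fun j k => ?_)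
  simp only [updateCol_apply]
  split_ifs
  exacts [hb j, hM j k]

lemma det_one_sub_smul_ne_zero {Q : Matrix n n ℝ} (hQ : Q ∈ rowStochastic ℝ n) {γ : ℝ}
    (hγ0 : 0 ≤ γ) (hγ1 : γ < 1) : (1 - γ • Q).det ≠ 0 := by
  refine det_ne_zero_of_sum_row_lt_diag fun k => ?_
  have hQkk_nonneg : 0 ≤ Q k k := nonneg_of_mem_rowStochastic hQ
  have hQkk_le : Q k k ≤ 1 := le_one_of_mem_rowStochastic hQ
  have hoff : ∀ j ∈ univ.erase k, ‖(1 - γ • Q) k j‖ = γ * Q k j := fun j hj => by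
    simp [(ne_of_mem_erase hj).symm, abs_of_nonneg, hγ0, nonneg_of_mem_rowStochastic hQ]
  rw [sum_congr rfl hoff, ← mul_sum, sum_erase_eq_sub (mem_univ k),
    sum_row_of_mem_rowStochastic hQ]
  have hdiag : ‖(1 - γ • Q) k k‖ = 1 - γ * Q k k := by
    simp [abs_of_pos (show 0 < 1 - γ * Q k k by nlinarith)]
  rw [hdiag]
  nlinarith

end LinearSystem

section MDP

open Matrix

noncomputable def transitionMatrix (P : S → A → S → ℝ) (π : S → A → ℝ) : Matrix S S ℝ :=
  of fun s s' => ∑ a, π s a * P s a s'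

noncomputable def regReward (r : S → A → ℝ) (lam : ℝ) (f : ℝ → ℝ) (πref π : S → A → ℝ) :
    S → ℝ :=
  fun s => ∑ a, π s a * r s a - lam * fDiv f (π s) (πref s)

variable [Fintype S]

lemma transitionMatrix_mulVec (P : S → A → S → ℝ) (π : S → A → ℝ) (x : S → ℝ) (s : S) :
    (transitionMatrix P π *ᵥ x) s = ∑ a, π s a * ∑ s', P s a s' * x s' := by
  simp only [mulVec, dotProduct, transitionMatrix, of_apply, sum_mul, mul_sum]
  rw [sum_comm]
  simp only [mul_assoc]

lemma transitionMatrix_mem_rowStochastic [DecidableEq S] {P : S → A → S → ℝ}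
    (hP : ∀ s a, (∀ s', 0 ≤ P s a s') ∧ ∑ s', P s a s' = 1) {π : S → A → ℝ}
    (hπ : IsPolicy π) : transitionMatrix P π ∈ rowStochastic ℝ S := by
  refine mem_rowStochastic_iff_sum.2 ⟨fun s s' => ?_, fun s => ?_⟩
  · exact sum_nonneg fun a _ => mul_nonneg (hπ.1 s a).le ((hP s a).1 s')
  · simp only [transitionMatrix, of_apply]
    rw [sum_comm]
    simp [← mul_sum, (hP s _).2, hπ.2 s]

lemma IsRegValue.one_sub_smul_mulVec [DecidableEq S] {P : S → A → S → ℝ} {r : S → A → ℝ}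
    {γ lam : ℝ} {f : ℝ → ℝ} {πref π : S → A → ℝ} {V : S → ℝ}
    (hV : IsRegValue P r γ lam f πref π V) :
    (1 - γ • transitionMatrix P π) *ᵥ V = regReward r lam f πref π := by
  funext s
  rw [sub_mulVec, one_mulVec, smul_mulVec, Pi.sub_apply, Pi.smul_apply, smul_eq_mul,
    transitionMatrix_mulVec, regReward, hV s]
  simp only [mul_add, sum_add_distrib, mul_left_comm _ γ, ← mul_sum]
  ring

-- `x = (1 - γ P_π)⁻¹ K`, while `d = (1 - γ) μ (1 - γ P_π)⁻¹` as a row vector.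
lemma IsVisitation.one_sub_mul_dotProduct_eq {P : S → A → S → ℝ} {γ : ℝ} {π : S → A → ℝ}
    {μ d : S → ℝ} (hd : IsVisitation P γ π μ d) {x K : S → ℝ}
    (hx : ∀ s, x s = K s + γ * (transitionMatrix P π *ᵥ x) s) :
    (1 - γ) * (μ ⬝ᵥ x) = d ⬝ᵥ K := by
  have hd' : d = (1 - γ) • μ + γ • (d ᵥ* transitionMatrix P π) := by
    funext s
    rw [hd s]
    simp [vecMul, dotProduct, transitionMatrix]
  have hx' : x = K + γ • (transitionMatrix P π *ᵥ x) := funext hx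
  have h1 : d ⬝ᵥ x = d ⬝ᵥ K + γ * ((d ᵥ* transitionMatrix P π) ⬝ᵥ x) := by
    conv_lhs => rw [hx']
    rw [dotProduct_add, dotProduct_smul, dotProduct_mulVec, smul_eq_mul]
  have h2 : d ⬝ᵥ x = (1 - γ) * (μ ⬝ᵥ x) + γ * ((d ᵥ* transitionMatrix P π) ⬝ᵥ x) := by
    conv_lhs => rw [hd']
    rw [add_dotProduct, smul_dotProduct, smul_dotProduct, smul_eq_mul, smul_eq_mul]
  linarith

lemma regValue_deriv_eq_bellman {P : S → A → S → ℝ} {r : S → A → ℝ} {γ lam : ℝ} {f : ℝ → ℝ}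
    (hf : ∀ x ∈ Set.Ioi (0 : ℝ), DifferentiableAt ℝ f x) {πref : S → A → ℝ}
    (hπref : ∀ s a, 0 < πref s a) {π : ℝ → S → A → ℝ} {V : ℝ → S → ℝ} {π' : S → A → ℝ}
    {V' : S → ℝ} {t : ℝ} (hV : ∀ t, IsRegValue P r γ lam f πref (π t) (V t))
    (hπ : ∀ s a, HasDerivAt (π · s a) (π' s a) t) (hπ_pos : ∀ s a, 0 < π t s a)
    (hV' : ∀ s, HasDerivAt (V · s) (V' s) t) (s : S) :
    V' s = ∑ a, π' s a * (r s a + γ * ∑ s', P s a s' * V t s' -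
        lam * deriv f (π t s a / πref s a)) + γ * (transitionMatrix P (π t) *ᵥ V') s := by
  have hq (a : A) : HasDerivAt (fun t => r s a + γ * ∑ s', P s a s' * V t s')
      (γ * ∑ s', P s a s' * V' s') t :=
    ((HasDerivAt.fun_sum (u := univ) fun s' _ => (hV' s').const_mul (P s a s')).const_mul
      γ).const_add (r s a)
  have hbellman := (HasDerivAt.fun_sum (u := univ) fun a _ => (hπ s a).fun_mul (hq a)).sub
    ((hasDerivAt_fDiv hf (hπ s) (hπ_pos s) (hπref s)).const_mul lam)
  rw [(hV' s).unique (hbellman.congr_of_eventuallyEq (.of_forall fun t => hV t s)),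
    transitionMatrix_mulVec]
  simp only [mul_sub, mul_add, sum_add_distrib, sum_sub_distrib, mul_sum, mul_left_comm,
    mul_comm]
  ring

noncomputable def policyGradientWeight (P : S → A → S → ℝ) (r : S → A → ℝ) (γ lam : ℝ)
    (f : ℝ → ℝ) (πref π : S → A → ℝ) (V : S → ℝ) (s : S) (a : A) : ℝ :=
  π s a * ((Qreg P r γ lam f πref π V s a - V s) -
    lam * (deriv f (π s a / πref s a) - ∑ a', π s a' * deriv f (π s a' / πref s a')))

lemma IsRegValue.sum_softmaxDeriv_mul {P : S → A → S → ℝ} {r : S → A → ℝ} {γ lam : ℝ}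
    {f : ℝ → ℝ} {πref π : S → A → ℝ} {V : S → ℝ} (hV : IsRegValue P r γ lam f πref π V)
    (s : S) (v : A → ℝ) :
    ∑ a, π s a * (v a - ∑ c, π s c * v c) *
        (r s a + γ * ∑ s', P s a s' * V s' - lam * deriv f (π s a / πref s a)) =
      ∑ a, v a * policyGradientWeight P r γ lam f πref π V s a := by
  rw [sum_mul_sub_sum_mul]
  refine sum_congr rfl fun a _ => ?_
  rw [policyGradientWeight, Qreg, hV s]
  simp only [mul_sub, mul_add, sum_sub_distrib, sum_add_distrib, mul_sum, mul_left_comm,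
    mul_comm]
  ring

end MDP

section SoftmaxValue

open Matrix

variable [Fintype S] [DecidableEq S] [Nonempty A] {P : S → A → S → ℝ} {r : S → A → ℝ}
  {γ lam : ℝ} {f : ℝ → ℝ} {πref : S → A → ℝ}

lemma differentiable_regValue (hP : ∀ s a, (∀ s', 0 ≤ P s a s') ∧ ∑ s', P s a s' = 1)
    (hγ0 : 0 ≤ γ) (hγ1 : γ < 1) (hπref : IsPolicy πref)
    (hf : ∀ x ∈ Set.Ioi (0 : ℝ), DifferentiableAt ℝ f x) {V : EuclideanSpace ℝ (S × A) → S → ℝ}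
    (hV : ∀ θ : EuclideanSpace ℝ (S × A), IsRegValue P r γ lam f πref (softmaxPolicy θ) (V θ))
    (s : S) : Differentiable ℝ (V · s) := by
  refine differentiable_of_mulVec_eq (fun i j => ?_) (fun i => ?_)
    (fun θ : EuclideanSpace ℝ (S × A) => det_one_sub_smul_ne_zero
      (transitionMatrix_mem_rowStochastic hP (isPolicy_softmaxPolicy θ)) hγ0 hγ1)
    (fun θ => (hV θ).one_sub_smul_mulVec) s
  · simp only [Matrix.sub_apply, Matrix.smul_apply, smul_eq_mul, transitionMatrix, of_apply]
    exact (differentiable_const _).sub ((Differentiable.fun_sum fun a _ =>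
      (differentiable_softmaxPolicy i a).mul_const _).const_mul γ)
  · exact (Differentiable.fun_sum fun a _ => (differentiable_softmaxPolicy i a).mul_const _).sub
      ((differentiable_fDiv (p := fun θ : EuclideanSpace ℝ (S × A) => softmaxPolicy θ i) hf
        (differentiable_softmaxPolicy i) (softmaxPolicy_pos · i)
        (hπref.1 i)).const_mul lam)

lemma hasLineDerivAt_regValue (hP : ∀ s a, (∀ s', 0 ≤ P s a s') ∧ ∑ s', P s a s' = 1)
    (hγ0 : 0 ≤ γ) (hγ1 : γ < 1) (hπref : IsPolicy πref)
    (hf : ∀ x ∈ Set.Ioi (0 : ℝ), DifferentiableAt ℝ f x) {V : EuclideanSpace ℝ (S × A) → S → ℝ}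
    (hV : ∀ θ : EuclideanSpace ℝ (S × A), IsRegValue P r γ lam f πref (softmaxPolicy θ) (V θ))
    {u : S → ℝ} {d : EuclideanSpace ℝ (S × A) → S → ℝ}
    (hd : ∀ θ : EuclideanSpace ℝ (S × A), IsVisitation P γ (softmaxPolicy θ) u (d θ))
    (θ v : EuclideanSpace ℝ (S × A)) :
    HasLineDerivAt ℝ (fun θ => ∑ s, u s * V θ s) ((1 - γ)⁻¹ * ∑ s, d θ s *
      ∑ a, v (s, a) * policyGradientWeight P r γ lam f πref (softmaxPolicy θ) (V θ) s a) θ v := by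
  have hVline (s : S) : HasDerivAt (fun t : ℝ => V (θ + t • v) s) (fderiv ℝ (V · s) θ v) 0 :=
    ((differentiable_regValue hP hγ0 hγ1 hπref hf hV s) θ).hasFDerivAt.hasLineDerivAt v
  have hbellman (s : S) := regValue_deriv_eq_bellman hf hπref.1 (fun t => hV (θ + t • v))
    (fun s a => hasDerivAt_softmaxPolicy_line θ v s a) (fun s a => softmaxPolicy_pos _ s a)
    hVline s
  simp only [zero_smul, add_zero] at hbellman
  have hpair := (hd θ).one_sub_mul_dotProduct_eq hbellman
  simp only [(hV θ).sum_softmaxDeriv_mul, dotProduct] at hpair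
  refine (HasDerivAt.fun_sum fun s _ => (hVline s).const_mul (u s)).congr_deriv ?_
  field_simp [(sub_pos.2 hγ1).ne']
  linarith [hpair]

end SoftmaxValue

end

theorem policy_gradient_formula_general
    {S A : Type*} [Fintype S] [Fintype A] [Nonempty A]
    [DecidableEq S] [DecidableEq A]
    (P : S → A → S → ℝ) (hP : ∀ s a, (∀ s', 0 ≤ P s a s') ∧ ∑ s' : S, P s a s' = 1)
    (r : S → A → ℝ)
    (γ : ℝ) (hγ0 : 0 ≤ γ) (hγ1 : γ < 1)
    (πref : S → A → ℝ) (hπref : IsPolicy πref)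
    (f : ℝ → ℝ)
    (hfdiff : ∀ x ∈ Set.Ioi (0 : ℝ), DifferentiableAt ℝ f x)
    (lam : ℝ)
    (u : S → ℝ)
    (V : EuclideanSpace ℝ (S × A) → S → ℝ)
    (hV : ∀ θ, IsRegValue P r γ lam f πref (softmaxPolicy θ) (V (WithLp.toLp 2 θ)))
    (d : EuclideanSpace ℝ (S × A) → S → ℝ)
    (hd : ∀ θ, IsVisitation P γ (softmaxPolicy θ) u (d (WithLp.toLp 2 θ))) :
    Differentiable ℝ (fun θ : EuclideanSpace ℝ (S × A) => ∑ s : S, u s * V θ s) ∧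
    ∀ (θ : EuclideanSpace ℝ (S × A)) (s : S) (a : A),
      fderiv ℝ (fun θ' : EuclideanSpace ℝ (S × A) => ∑ s' : S, u s' * V θ' s') θ
          (EuclideanSpace.single (s, a) (1 : ℝ)) =
        d θ s / (1 - γ) * softmaxPolicy θ s a *
          ((Qreg P r γ lam f πref (softmaxPolicy θ) (V θ) s a - V θ s) -
            lam * (deriv f (softmaxPolicy θ s a / πref s a) -
              ∑ a' : A, softmaxPolicy θ s a' *
                deriv f (softmaxPolicy θ s a' / πref s a'))) := by
  have hJ : Differentiable ℝ (fun θ : EuclideanSpace ℝ (S × A) => ∑ s, u s * V θ s) :=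
    Differentiable.fun_sum fun s _ =>
      (differentiable_regValue hP hγ0 hγ1 hπref hfdiff (fun θ => hV θ) s).const_mul (u s)
  refine ⟨hJ, fun θ s a => ?_⟩
  rw [← (hJ θ).lineDeriv_eq_fderiv, (hasLineDerivAt_regValue hP hγ0 hγ1 hπref hfdiff
    (fun θ => hV θ) (fun θ => hd θ) θ _).lineDeriv]
  simp only [PiLp.single_apply, Prod.mk.injEq, ite_and, ite_mul, one_mul, zero_mul,
    sum_ite_irrel, sum_const_zero, sum_ite_eq', mem_univ, if_true, mul_ite, mul_zero]
  rw [policyGradientWeight]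
  ring

/-- (Policy gradient formula) Suppose `f` is differentiable on `(0,∞)`.
Then `θ ↦ Ṽ_λ^{π_θ}(u)` is differentiable and its partial derivative in the `(s,a)`
coordinate is `(d_u^{π_θ}(s)/(1−γ)) π_θ(a|s) [Ã_λ^{π_θ}(s,a) −
λ(f'(w_{sa}) − ∑_{a'} π_θ(a'|s) f'(w_{sa'}))]`, where `w_{sa} = π_θ(a|s)/π_ref(a|s)`. -/
theorem policy_gradient_formula
    {S A : Type*} [Fintype S] [Fintype A] [Nonempty S] [Nonempty A]
    [DecidableEq S] [DecidableEq A]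
    (P : S → A → S → ℝ) (hP : ∀ s a, (∀ s', 0 ≤ P s a s') ∧ ∑ s' : S, P s a s' = 1)
    (r : S → A → ℝ) (rmax : ℝ) (hr : ∀ s a, 0 ≤ r s a ∧ r s a ≤ rmax)
    (γ : ℝ) (hγ0 : 0 ≤ γ) (hγ1 : γ < 1)
    (πref : S → A → ℝ) (hπref : IsPolicy πref)
    (f : ℝ → ℝ) (hfconv : ConvexOn ℝ (Set.Ioi 0) f) (hf1 : f 1 = 0)
    (hfdiff : ∀ x ∈ Set.Ioi (0 : ℝ), DifferentiableAt ℝ f x)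
    (lam : ℝ) (hlam : 0 < lam)
    (u : S → ℝ) (hu : (∀ s, 0 ≤ u s) ∧ ∑ s : S, u s = 1)
    (V : EuclideanSpace ℝ (S × A) → S → ℝ)
    (hV : ∀ θ, IsRegValue P r γ lam f πref (softmaxPolicy θ) (V (WithLp.toLp 2 θ)))
    (d : EuclideanSpace ℝ (S × A) → S → ℝ)
    (hd : ∀ θ, IsVisitation P γ (softmaxPolicy θ) u (d (WithLp.toLp 2 θ))) :
    Differentiable ℝ (fun θ : EuclideanSpace ℝ (S × A) => ∑ s : S, u s * V θ s) ∧
    ∀ (θ : EuclideanSpace ℝ (S × A)) (s : S) (a : A),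
      fderiv ℝ (fun θ' : EuclideanSpace ℝ (S × A) => ∑ s' : S, u s' * V θ' s') θ
          (EuclideanSpace.single (s, a) (1 : ℝ)) =
        d θ s / (1 - γ) * softmaxPolicy θ s a *
          ((Qreg P r γ lam f πref (softmaxPolicy θ) (V θ) s a - V θ s) -
            lam * (deriv f (softmaxPolicy θ s a / πref s a) -
              ∑ a' : A, softmaxPolicy θ s a' *
                deriv f (softmaxPolicy θ s a' / πref s a'))) :=
  policy_gradient_formula_general P hP r γ hγ0 hγ1 πref hπref f hfdiff lam u V hV d hd
end

section
/- (Convergence of inexact gradient ascent with relative error) Let F : ℝ^d → ℝ be differentiable with L-Lipschitz gradient (L > 0), and let sequences (θ_n) in ℝ^d, (g_n) in ℝ^d, and (S_n) in (0,∞) satisfy: θ_{n+1} = θ_n + S_n g_n for all n; ‖g_n − ∇F(θ_n)‖₂ ≤ (1/4)‖∇F(θ_n)‖₂ for all n; 2 S_n L ≤ 1 for all n; ∑_{n=1}^∞ S_n ‖∇F(θ_n)‖₂² < ∞; and ∑_{n=1}^∞ S_n = ∞. Then lim_{n→∞} ‖∇F(θ_n)‖₂ = 0. -/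
open Filter

set_option maxHeartbeats 1000000 in
/-- (Convergence of inexact gradient ascent with relative error)
Let `F : ℝ^d → ℝ` be differentiable with `L`-Lipschitz gradient, `θ_{n+1} = θ_n + S_n g_n`,
`‖g_n − ∇F(θ_n)‖₂ ≤ (1/4)‖∇F(θ_n)‖₂`, `2 S_n L ≤ 1`, `∑_n S_n ‖∇F(θ_n)‖₂² < ∞`, and
`∑_n S_n = ∞`. Then `lim_{n→∞} ‖∇F(θ_n)‖₂ = 0`. -/
theorem inexact_gradient_ascent_relative_error_convergence
    {d : ℕ} (F : EuclideanSpace ℝ (Fin d) → ℝ)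
    (L : ℝ) (hL : 0 < L)
    (hF : Differentiable ℝ F)
    (hlip : ∀ x y : EuclideanSpace ℝ (Fin d),
      ‖gradient F x - gradient F y‖ ≤ L * ‖x - y‖)
    (θ g : ℕ → EuclideanSpace ℝ (Fin d)) (Sn : ℕ → ℝ)
    (hSpos : ∀ n, 0 < Sn n)
    (hupd : ∀ n, θ (n + 1) = θ n + Sn n • g n)
    (herr : ∀ n, ‖g n - gradient F (θ n)‖ ≤ (1 / 4) * ‖gradient F (θ n)‖)
    (hstep : ∀ n, 2 * Sn n * L ≤ 1)
    (hsum : Summable (fun n => Sn n * ‖gradient F (θ n)‖ ^ 2))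
    (hdiv : Tendsto (fun N => ∑ n ∈ Finset.range N, Sn n) atTop atTop) :
    Tendsto (fun n => ‖gradient F (θ n)‖) atTop (nhds 0) := by
  set a : ℕ → ℝ := fun n => ‖gradient F (θ n)‖ with ha
  have hanonneg : ∀ n, 0 ≤ a n := fun n => norm_nonneg _
  have hterm : ∀ k, 0 ≤ Sn k * a k ^ 2 := fun k =>
    mul_nonneg (hSpos k).le (sq_nonneg _)
  -- key one-step estimate
  have hstep1 : ∀ n, a (n + 1) ≤ a n + (5/4) * L * Sn n * a n := by
    intro n
    have hθ : ‖θ (n+1) - θ n‖ = Sn n * ‖g n‖ := by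
      rw [hupd n]
      simp [norm_smul, abs_of_pos (hSpos n)]
    have hg : ‖g n‖ ≤ (5/4) * a n := by
      have h1 := herr n
      have h2 : ‖g n‖ ≤ ‖g n - gradient F (θ n)‖ + ‖gradient F (θ n)‖ := by
        have := norm_add_le (g n - gradient F (θ n)) (gradient F (θ n))
        simpa using this
      simp only [ha]
      linarith
    have h3 : a (n+1) - a n ≤ ‖gradient F (θ (n+1)) - gradient F (θ n)‖ :=
      norm_sub_norm_le _ _
    have h4 := hlip (θ (n+1)) (θ n)
    rw [hθ] at h4
    have hSn := (hSpos n).le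
    nlinarith [mul_le_mul_of_nonneg_left hg (mul_nonneg hL.le hSn)]
  rw [Metric.tendsto_atTop]
  intro ε hε
  set ε' : ℝ := ε / 2 with hε'def
  have hε' : 0 < ε' := by positivity
  set δ : ℝ := 3 * ε' ^ 2 / (40 * L) with hδdef
  have hδ : 0 < δ := by positivity
  set C : ℝ := 5 * L / (2 * ε') with hCdef
  have hC : 0 < C := by positivity
  set T : ℝ := ∑' k, Sn k * a k ^ 2 with hT
  set P : ℕ → ℝ := fun n => ∑ k ∈ Finset.range n, Sn k * a k ^ 2 with hP
  have hPle : ∀ n, P n ≤ T := fun n => Summable.sum_le_tsum _ (fun k _ => hterm k) hsum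
  obtain ⟨N₁, hN₁⟩ := Metric.tendsto_atTop.mp hsum.hasSum.tendsto_sum_nat δ hδ
  have htail : ∀ m, N₁ ≤ m → T - P m < δ := by
    intro m hm
    have := hN₁ m hm
    rw [Real.dist_eq, abs_sub_lt_iff] at this
    linarith [this.2]
  -- find m ≥ N₁ with a m < ε'/2
  obtain ⟨m, hmN₁, ham⟩ : ∃ m, N₁ ≤ m ∧ a m < ε' / 2 := by
    by_contra hcon
    push_neg at hcon
    obtain ⟨n, hn1, hn2⟩ :=
      ((hdiv.eventually_ge_atTop ((∑ k ∈ Finset.range N₁, Sn k) + (T + 1) / (ε'/2)^2)).and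
        (eventually_ge_atTop N₁)).exists
    have hsub : ∑ k ∈ Finset.Ico N₁ n, Sn k
        = (∑ k ∈ Finset.range n, Sn k) - ∑ k ∈ Finset.range N₁, Sn k := by
      rw [Finset.sum_Ico_eq_sub _ hn2]
    have hcomp : (ε'/2)^2 * ∑ k ∈ Finset.Ico N₁ n, Sn k
        ≤ ∑ k ∈ Finset.Ico N₁ n, Sn k * a k ^ 2 := by
      rw [Finset.mul_sum]
      apply Finset.sum_le_sum
      intro k hk
      have hk1 := (Finset.mem_Ico.mp hk).1
      have h5 := hcon k hk1
      have h6 : (ε'/2)^2 ≤ a k ^ 2 := by nlinarith [hε'.le, hanonneg k]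
      rw [mul_comm]
      exact mul_le_mul_of_nonneg_left h6 (hSpos k).le
    have hIco_le : ∑ k ∈ Finset.Ico N₁ n, Sn k * a k ^ 2 ≤ T := by
      calc ∑ k ∈ Finset.Ico N₁ n, Sn k * a k ^ 2
          ≤ ∑ k ∈ Finset.range n, Sn k * a k ^ 2 := by
            rw [Finset.range_eq_Ico]
            exact Finset.sum_le_sum_of_subset_of_nonneg
              (Finset.Ico_subset_Ico (Nat.zero_le _) le_rfl)
              (fun k _ _ => hterm k)
        _ ≤ T := hPle n
    have hq : (0:ℝ) < (ε'/2)^2 := by positivity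
    have h6 : (∑ k ∈ Finset.range n, Sn k) - (∑ k ∈ Finset.range N₁, Sn k)
        ≥ (T + 1) / (ε'/2)^2 := by linarith
    have h7 : (ε'/2)^2 * ((T + 1) / (ε'/2)^2) = T + 1 := by
      field_simp
    nlinarith [mul_le_mul_of_nonneg_left h6 hq.le]
  -- the invariant
  set W : ℕ → ℝ := fun n => ∑ k ∈ Finset.Ico m n, Sn k * a k ^ 2 with hW
  have hWnonneg : ∀ n, 0 ≤ W n := fun n => Finset.sum_nonneg (fun k _ => hterm k)
  have hinv : ∀ n, m ≤ n → a n ≤ 13 * ε' / 16 + C * W n := by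
    intro n hmn
    induction n, hmn using Nat.le_induction with
    | base =>
      have : W m = 0 := by simp [hW]
      rw [this]
      linarith
    | succ n hmn IH =>
      have hWsucc : W (n+1) = W n + Sn n * a n ^ 2 := by
        simp only [hW]
        rw [Finset.sum_Ico_succ_top hmn]
      have h1 := hstep1 n
      have hSL := hstep n
      have hSn := hSpos n
      rcases lt_or_ge (a n) (ε' / 2) with hsmall | hbig
      · -- a (n+1) ≤ (13/8) a n < 13 ε'/16
        have h2 : a (n+1) ≤ (13/8) * a n := by
          nlinarith [hanonneg n]
        have := hWnonneg (n+1)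
        nlinarith
      · -- a (n+1) ≤ a n + C * Sn n * a n ^ 2
        have h2 : (5/4) * L * Sn n * a n ≤ C * (Sn n * a n ^ 2) := by
          have hC' : C * (Sn n * a n ^ 2) = 5 * L * (Sn n * a n ^ 2) / (2 * ε') := by
            rw [hCdef]; ring
          rw [hC', le_div_iff₀ (by positivity)]
          nlinarith [hanonneg n,
            mul_le_mul_of_nonneg_left hbig
              (by positivity : (0:ℝ) ≤ 5 * L * Sn n * a n)]
        rw [hWsucc]
        linarith
  -- conclude
  refine ⟨m, fun n hn => ?_⟩
  have hWle : W n ≤ δ := by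
    have hsub : W n = P n - P m := by
      simp only [hW, hP]
      rw [Finset.sum_Ico_eq_sub _ hn]
    have := htail m hmN₁
    have := hPle n
    linarith
  have hCδ : C * δ = 3 * ε' / 16 := by
    rw [hCdef, hδdef, div_mul_div_comm,
      div_eq_iff (by positivity : (0:ℝ) < (2*ε') * (40*L)).ne']
    ring
  have hineq := hinv n hn
  have hfin : a n ≤ ε' := by
    have h8 : C * W n ≤ C * δ := mul_le_mul_of_nonneg_left hWle hC.le
    linarith
  rw [Real.dist_eq, sub_zero, abs_of_nonneg (hanonneg n)]
  have hlt : ε' < ε := by rw [hε'def]; linarith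
  linarith
end
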